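/- In the free group on h₁, l₂, …, l_m, the normal closure of the set of pencil relators {h₁ l_m ⋯ l₂ (l_m ⋯ l₂ h₁)⁻¹} ∪ {h₁ l_m ⋯ l₂ (l_k ⋯ l₂ h₁ l_m ⋯ l_{k+1})⁻¹ : 2 ≤ k ≤ m-1} equals the normal closure of the set {[h₁ l_m ⋯ l₂, l_k] : 2 ≤ k ≤ m}. -/

import Mathlib

/-- `dp l a b = l b * l (b-1) * ⋯ * l a` (the product in decreasing index order);
it is `1` when `b < a`. -/
def dp {G : Type*} [Group G] (l : ℕ → G) (a b : ℕ) : G :=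
  ((List.range' a (b + 1 - a)).reverse.map l).prod

/-- The commutator `[x, y] = x y x⁻¹ y⁻¹`. -/
def commr {G : Type*} [Group G] (x y : G) : G := x * y * x⁻¹ * y⁻¹

/-- The generating set `{h₁, …, h_n} ⊔ {l₂, …, l_m}`. -/
abbrev Gen (n m : ℕ) := Fin n ⊕ Fin (m - 1)

/-- The generator `h_j` (for `1 ≤ j ≤ n`). -/
def hgen (n m j : ℕ) : FreeGroup (Gen n m) :=
  if hj : j - 1 < n then FreeGroup.of (Sum.inl ⟨j - 1, hj⟩) else 1

/-- The generator `l_k` (for `2 ≤ k ≤ m`). -/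
def lgen (n m k : ℕ) : FreeGroup (Gen n m) :=
  if hk : k - 2 < m - 1 then FreeGroup.of (Sum.inr ⟨k - 2, hk⟩) else 1

/-!
Put `g = h₁ l_m ⋯ l₂` and `w_k = l_k ⋯ l₂ h₁ l_m ⋯ l_{k+1}`, so that `w₁ = g` and the pencil
relators say `g = w_k` for `2 ≤ k ≤ m`. Since `w_k = l_k w_{k-1} l_k⁻¹`, in any group where
`g = w_{k-1}` the relation `g = w_k` is equivalent to `[g, l_k] = 1`. By induction on `k` both
families of relators therefore hold in exactly the same quotients of the free group, i.e. they lie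
in the same normal subgroups.
-/

section

variable {G : Type*} [Group G]

theorem commute_iff_mul_mul_inv_eq {x c : G} : Commute x c ↔ c * x * c⁻¹ = x := by
  rw [mul_inv_eq_iff_eq_mul, commute_iff_eq, eq_comm]

theorem forall_eq_iff_forall_commute_of_conj {x c : ℕ → G} {a b : ℕ}
    (hx : ∀ k, a ≤ k → k < b → x (k + 1) = c (k + 1) * x k * (c (k + 1))⁻¹) :
    (∀ k, a < k → k ≤ b → x a = x k) ↔ ∀ k, a < k → k ≤ b → Commute (x a) (c k) := by
  constructor
  · intro heq k hak hkb
    obtain ⟨j, rfl⟩ : ∃ j, k = j + 1 := ⟨k - 1, by omega⟩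
    have hj : x a = x j := by
      rcases (Nat.lt_succ_iff.mp hak).eq_or_lt with rfl | haj
      · rfl
      · exact heq j haj (by omega)
    rw [commute_iff_mul_mul_inv_eq]
    calc c (j + 1) * x a * (c (j + 1))⁻¹ = x (j + 1) := by rw [hj, hx j (by omega) hkb]
      _ = x a := (heq (j + 1) hak hkb).symm
  · intro hcomm
    suffices ∀ k, a ≤ k → k ≤ b → x a = x k from fun k hak hkb => this k hak.le hkb
    intro k hak
    induction k, hak using Nat.le_induction with
    | base => exact fun _ => rfl
    | succ k hak ih =>
      intro hkb
      rw [hx k hak hkb, ← ih (by omega),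
        commute_iff_mul_mul_inv_eq.mp (hcomm (k + 1) (by omega) hkb)]

theorem mul_inv_mem_iff_mk_eq {N : Subgroup G} [N.Normal] {x y : G} :
    x * y⁻¹ ∈ N ↔ (x : G ⧸ N) = y := by
  rw [QuotientGroup.eq_iff_div_mem, div_eq_mul_inv]

theorem commr_mem_iff_commute_mk {N : Subgroup G} [N.Normal] {x y : G} :
    commr x y ∈ N ↔ Commute (x : G ⧸ N) y := by
  rw [commr, mul_assoc, ← mul_inv_rev, mul_inv_mem_iff_mk_eq, commute_iff_eq]
  rfl

theorem normalClosure_eq_of_forall_normal {S T : Set G}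
    (h : ∀ N : Subgroup G, N.Normal → (S ⊆ N ↔ T ⊆ N)) :
    Subgroup.normalClosure S = Subgroup.normalClosure T :=
  le_antisymm
    (Subgroup.normalClosure_le_normal ((h _ inferInstance).2 Subgroup.subset_normalClosure))
    (Subgroup.normalClosure_le_normal ((h _ inferInstance).1 Subgroup.subset_normalClosure))

end

section

variable {G : Type*} [Group G] (l : ℕ → G)

theorem dp_eq_one_of_lt {a b : ℕ} (h : b < a) : dp l a b = 1 := by
  simp [dp, Nat.sub_eq_zero_of_le h]

theorem dp_succ_right {a b : ℕ} (h : a ≤ b + 1) : dp l a (b + 1) = l (b + 1) * dp l a b := by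
  rw [dp, dp, show b + 1 + 1 - a = b + 1 - a + 1 by omega, List.range'_1_concat,
    show a + (b + 1 - a) = b + 1 by omega]
  simp

theorem dp_eq_dp_mul {a b : ℕ} (h : a ≤ b) : dp l a b = dp l (a + 1) b * l a := by
  rw [dp, dp, show b + 1 - a = b + 1 - (a + 1) + 1 by omega, List.range'_succ]
  simp

end

section

variable {G : Type*} [Group G] (l : ℕ → G) (h : G) (m : ℕ)

/-- `pencilWord l h m k = l_k ⋯ l₂ h l_m ⋯ l_{k+1}`; for `k = 1` it is `g = h l_m ⋯ l₂`. -/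
def pencilWord (k : ℕ) : G := dp l 2 k * h * dp l (k + 1) m

theorem pencilWord_one : pencilWord l h m 1 = h * dp l 2 m := by
  rw [pencilWord, dp_eq_one_of_lt l one_lt_two, one_mul]

theorem pencilWord_self : pencilWord l h m m = dp l 2 m * h := by
  rw [pencilWord, dp_eq_one_of_lt l m.lt_succ_self, mul_one]

theorem pencilWord_succ {k : ℕ} (hk : 1 ≤ k) (hkm : k < m) :
    pencilWord l h m (k + 1) = l (k + 1) * pencilWord l h m k * (l (k + 1))⁻¹ := by
  rw [pencilWord, pencilWord, dp_succ_right l (by omega), dp_eq_dp_mul l (a := k + 1) hkm]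
  group

variable {l h m}

theorem pencilRelators_subset_iff {N : Subgroup G} (hm : 2 ≤ m) :
    ({h * dp l 2 m * (dp l 2 m * h)⁻¹} ∪
        {r | ∃ k, 2 ≤ k ∧ k ≤ m - 1 ∧ r = h * dp l 2 m * (dp l 2 k * h * dp l (k + 1) m)⁻¹}) ⊆ N ↔
      ∀ k, 1 < k → k ≤ m → pencilWord l h m 1 * (pencilWord l h m k)⁻¹ ∈ N := by
  simp only [Set.union_subset_iff, Set.singleton_subset_iff, Set.ofPred_subset,
    forall_exists_index, and_imp, SetLike.mem_coe, pencilWord_one]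
  constructor
  · rintro ⟨hlast, hmid⟩ k hk hkm
    rcases hkm.lt_or_eq with hkm | rfl
    · exact hmid _ k hk (by omega) rfl
    · rwa [pencilWord_self]
  · intro hall
    refine ⟨pencilWord_self l h m ▸ hall m hm le_rfl, ?_⟩
    rintro r k hk hkm rfl
    exact hall k hk (by omega)

theorem commutators_subset_iff {N : Subgroup G} :
    {r | ∃ k, 2 ≤ k ∧ k ≤ m ∧ r = commr (h * dp l 2 m) (l k)} ⊆ N ↔
      ∀ k, 1 < k → k ≤ m → commr (pencilWord l h m 1) (l k) ∈ N := by
  simp only [Set.ofPred_subset, forall_exists_index, and_imp, SetLike.mem_coe, pencilWord_one]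
  exact ⟨fun hall k hk hkm => hall _ k hk hkm rfl, fun hall r k hk hkm hr => hr ▸ hall k hk hkm⟩

end

/-- in the free group on `h₁, l₂, …, l_m`, the normal closure of the
pencil relators equals the normal closure of the commutators `[h₁ l_m ⋯ l₂, l_k]`,
`2 ≤ k ≤ m`. -/
theorem stmt15 (m : ℕ) (hm : 2 ≤ m) :
    Subgroup.normalClosure
        ({hgen 1 m 1 * dp (lgen 1 m) 2 m * (dp (lgen 1 m) 2 m * hgen 1 m 1)⁻¹} ∪
          {r : FreeGroup (Gen 1 m) | ∃ k, 2 ≤ k ∧ k ≤ m - 1 ∧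
            r = hgen 1 m 1 * dp (lgen 1 m) 2 m *
                  (dp (lgen 1 m) 2 k * hgen 1 m 1 * dp (lgen 1 m) (k + 1) m)⁻¹}) =
      Subgroup.normalClosure
        {r : FreeGroup (Gen 1 m) | ∃ k, 2 ≤ k ∧ k ≤ m ∧
          r = commr (hgen 1 m 1 * dp (lgen 1 m) 2 m) (lgen 1 m k)} := by
  refine normalClosure_eq_of_forall_normal fun N _ => ?_
  rw [pencilRelators_subset_iff hm, commutators_subset_iff]
  simp only [mul_inv_mem_iff_mk_eq, commr_mem_iff_commute_mk]
  refine forall_eq_iff_forall_commute_of_conj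
    (x := fun k => QuotientGroup.mk' N (pencilWord (lgen 1 m) (hgen 1 m 1) m k))
    (c := fun k => QuotientGroup.mk' N (lgen 1 m k)) fun k hk hkm => ?_
  rw [pencilWord_succ _ _ _ hk hkm, map_mul, map_mul, map_inv]
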